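/- For every l, c ∈ ℕ with c ≥ 1, every finite set of templates 𝒯, and every fixed finite label alphabet {0,1}^d, the relation of l-c-𝒯-bisimilarity on pointed labelled directed graphs with node labels in {0,1}^d has finite index, i.e., it has only finitely many equivalence classes. -/

import Mathlib

set_option maxHeartbeats 1000000

attribute [local instance 10] Classical.propDecidable

/-- A template `T = (V, E⁺, E⁻, r)`: vertex set `Fin (n+1)` (cardinality `n+1`),
root `0`, edges `pos`, non-edges `neg`, with `pos ∩ neg = ∅`. -/
structure Template where
  n : ℕ
  pos : Finset (Fin (n + 1) × Fin (n + 1))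
  neg : Finset (Fin (n + 1) × Fin (n + 1))
  disj : ∀ p, ¬(p ∈ pos ∧ p ∈ neg)

/-- A labelled directed graph with labels in `Λ`: a finite vertex set (a finite
subset of `ℕ`), an edge relation `E ⊆ V × V`, and a labelling of the nodes. -/
structure LGraph (Λ : Type) where
  verts : Finset ℕ
  edge : ℕ → ℕ → Prop
  lab : ℕ → Λ
  edge_mem : ∀ u w, edge u w → u ∈ verts ∧ w ∈ verts

/-- `f` is a template embedding of `T` into the pointed graph `(G, w)`:
an injective map sending the root to `w`, `E⁺`-pairs to edges and `E⁻`-pairs to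
non-edges. -/
def IsEmb {Λ : Type} (T : Template) (G : LGraph Λ) (w : ℕ) (f : Fin (T.n + 1) → ℕ) : Prop :=
  Function.Injective f ∧ f 0 = w ∧ (∀ i, f i ∈ G.verts) ∧
    (∀ p ∈ T.pos, G.edge (f p.1) (f p.2)) ∧ (∀ p ∈ T.neg, ¬ G.edge (f p.1) (f p.2))

/-- The (finite) set `emb(T,(G,w))` of template embeddings of `T` into `(G, w)`. -/
noncomputable def embFinset {Λ : Type} (T : Template) (G : LGraph Λ) (w : ℕ) :
    Finset (Fin (T.n + 1) → ℕ) :=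
  (Fintype.piFinset fun _ : Fin (T.n + 1) => G.verts).filter (IsEmb T G w)

/-- Forth condition: any `k` pairwise distinct template embeddings of `T` at `(G,v)`
can be matched by `k` pairwise distinct embeddings at `(G',v')`, pointwise related
by `Z`. -/
def Forth {Λ : Type} (Z : ℕ → ℕ → Prop) (T : Template) (G G' : LGraph Λ)
    (v v' : ℕ) (k : ℕ) : Prop :=
  ∀ F : Fin k → (Fin (T.n + 1) → ℕ), Function.Injective F → (∀ i, IsEmb T G v (F i)) →
    ∃ F' : Fin k → (Fin (T.n + 1) → ℕ), Function.Injective F' ∧ (∀ i, IsEmb T G' v' (F' i)) ∧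
      ∀ i u, Z (F i u) (F' i u)

/-- `Z` is a graded `l`-`𝒯`-bisimulation between `G` and `G'`, where the allowed
multiplicities `k` in the back-and-forth conditions are those satisfying `P`. -/
def IsBisimP {Λ : Type} (𝒯 : Finset Template) (P : ℕ → Prop) (G G' : LGraph Λ) :
    ℕ → (ℕ → ℕ → Prop) → Prop
  | 0, Z => ∀ v v', Z v v' → G.lab v = G'.lab v'
  | l + 1, Z => ∃ Z', IsBisimP 𝒯 P G G' l Z' ∧
      ∀ v v', Z v v' → Z' v v' ∧ ∀ T ∈ 𝒯, ∀ k, P k →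
        Forth Z' T G G' v v' k ∧ Forth (fun a b => Z' b a) T G' G v' v k

/-- `(G,v)` and `(G',v')` are graded `l`-`𝒯`-bisimilar. -/
def GBisimilar {Λ : Type} (𝒯 : Finset Template) (l : ℕ) (G : LGraph Λ) (v : ℕ)
    (G' : LGraph Λ) (v' : ℕ) : Prop :=
  ∃ Z, IsBisimP 𝒯 (fun k => 1 ≤ k) G G' l Z ∧ Z v v'

/-- `(G,v)` and `(G',v')` are `l`-`c`-`𝒯`-bisimilar (multiplicities restricted to `k ≤ c`). -/
def BBisimilar {Λ : Type} (𝒯 : Finset Template) (l c : ℕ) (G : LGraph Λ) (v : ℕ)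
    (G' : LGraph Λ) (v' : ℕ) : Prop :=
  ∃ Z, IsBisimP 𝒯 (fun k => 1 ≤ k ∧ k ≤ c) G G' l Z ∧ Z v v'

/-- `A↾c`: cap all multiplicities of a multiset at `c`. -/
noncomputable def mcap {α : Type} (c : ℕ) (m : Multiset α) : Multiset α :=
  m.toFinset.val.bind fun a => Multiset.replicate (min c (m.count a)) a

/-- The `𝒯`-WL colouring of `G` after `l` rounds, using `hash0` for the initial
colouring and `hash` for the refinement rounds; at each round the new colour of `v`
hashes its previous colour together with, for each template `T ∈ 𝒯`, the multiset of
`T`-labelled colourings induced by the template embeddings at `v`. -/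
noncomputable def colWL {Λ C : Type} (𝒯 : Finset Template) (hash0 : Λ → C)
    (hash : C → ((T : {x // x ∈ 𝒯}) → Multiset (Fin (T.1.n + 1) → C)) → C)
    (G : LGraph Λ) : ℕ → ℕ → C
  | 0, v => hash0 (G.lab v)
  | l + 1, v =>
      hash (colWL 𝒯 hash0 hash G l v)
        (fun T => (embFinset T.1 G v).val.map
          (fun f => fun u => colWL 𝒯 hash0 hash G l (f u)))

/-- A multiset function is `c`-bounded if its value is unchanged when all
multiplicities larger than `c` are replaced by `c`. -/
def CBoundedFun {α β : Type} (c : ℕ) (g : Multiset α → β) : Prop :=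
  ∀ m, g m = g (mcap c m)

/-- An `nAr`-ary `L`-layer `𝒯`-GNN with feature dimension `d`: templates from `𝒯`,
template-aggregation functions (invariant under root-fixing label-preserving template
automorphisms), outer multiset aggregation functions, combination functions, and a
Boolean classification function. -/
structure TGNN (𝒯 : Finset Template) (d nAr L : ℕ) where
  temp : Fin L → Fin nAr → Template
  temp_mem : ∀ l j, temp l j ∈ 𝒯
  aggT : (l : Fin L) → (j : Fin nAr) → ((Fin ((temp l j).n + 1) → (Fin d → ℝ)) → (Fin d → ℝ))
  aggT_inv : ∀ (l : Fin L) (j : Fin nAr) (σ : Equiv.Perm (Fin ((temp l j).n + 1)))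
      (lab₁ lab₂ : Fin ((temp l j).n + 1) → (Fin d → ℝ)),
      σ 0 = 0 →
      (∀ p : Fin ((temp l j).n + 1) × Fin ((temp l j).n + 1),
        p ∈ (temp l j).pos ↔ (σ p.1, σ p.2) ∈ (temp l j).pos) →
      (∀ p : Fin ((temp l j).n + 1) × Fin ((temp l j).n + 1),
        p ∈ (temp l j).neg ↔ (σ p.1, σ p.2) ∈ (temp l j).neg) →
      (∀ u, u ≠ 0 → lab₁ u = lab₂ (σ u)) →
      aggT l j lab₁ = aggT l j lab₂
  agg : Fin L → Fin nAr → Multiset (Fin d → ℝ) → (Fin d → ℝ)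
  comb : Fin L → (Fin d → ℝ) → (Fin nAr → (Fin d → ℝ)) → (Fin d → ℝ)
  cls : (Fin d → ℝ) → Bool

/-- The feature vector `λ^l(v)` of node `v` after `l` layers of the `𝒯`-GNN `N` on
input graph `G`. -/
noncomputable def TGNN.feat {𝒯 : Finset Template} {d nAr L : ℕ} (N : TGNN 𝒯 d nAr L)
    (G : LGraph (Fin d → ℝ)) : ℕ → ℕ → (Fin d → ℝ)
  | 0, v => G.lab v
  | l + 1, v =>
      if h : l < L then
        N.comb ⟨l, h⟩ (N.feat G l v)
          (fun j => N.agg ⟨l, h⟩ j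
            ((embFinset (N.temp ⟨l, h⟩ j) G v).val.map
              (fun f => N.aggT ⟨l, h⟩ j (fun u => N.feat G l (f u)))))
      else fun _ => 0

/-- A `𝒯`-GNN is `c`-bounded if all its outer aggregation functions are `c`-bounded. -/
def TGNN.IsCBounded {𝒯 : Finset Template} {d nAr L : ℕ} (N : TGNN 𝒯 d nAr L) (c : ℕ) : Prop :=
  ∀ l j, CBoundedFun c (N.agg l j)

def boolToReal (b : Bool) : ℝ := if b then 1 else 0

/-- Identify a `{0,1}^d`-labelled graph with a real-vector labelled graph. -/
def LGraph.toReal {d : ℕ} (G : LGraph (Fin d → Bool)) : LGraph (Fin d → ℝ) :=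
  ⟨G.verts, G.edge, fun v i => boolToReal (G.lab v i), G.edge_mem⟩

/-- Initialize real feature vectors of dimension `d'` from `{0,1}^a`-labels
(the first `a` coordinates hold the truth values of the propositions, the rest are `0`). -/
def initG {a : ℕ} (d' : ℕ) (G : LGraph (Fin a → Bool)) : LGraph (Fin d' → ℝ) :=
  ⟨G.verts, G.edge, fun v i => if h : (i : ℕ) < a then boolToReal (G.lab v ⟨i, h⟩) else 0,
    G.edge_mem⟩

/-- Formulae of graded template modal logic `GML(𝒯)` over propositions `AP`
(`⊤` included; a modality `⟨T⟩^{≥j}(φ₁,…,φ_{n_T})` takes `n_T = |V_T| - 1` arguments). -/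
inductive GML (AP : Type) : Type
  | top : GML AP
  | prop : AP → GML AP
  | neg : GML AP → GML AP
  | and : GML AP → GML AP → GML AP
  | dia : (T : Template) → ℕ → (Fin T.n → GML AP) → GML AP

/-- Semantics of `GML(𝒯)` on pointed labelled graphs:
`(G,v) ⊨ ⟨T⟩^{≥j}(φ⃗)` iff at least `j` embeddings `f ∈ emb(T,(G,v))` satisfy
`(G, f(i)) ⊨ φᵢ` for all `1 ≤ i ≤ n_T`. -/
def Sat {AP : Type} (G : LGraph (AP → Bool)) : GML AP → ℕ → Prop
  | .top, _ => True
  | .prop p, v => G.lab v p = true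
  | .neg φ, v => ¬ Sat G φ v
  | .and φ ψ, v => Sat G φ v ∧ Sat G ψ v
  | .dia T j φs, v =>
      j ≤ ((embFinset T G v).filter
        (fun f => ∀ i : Fin T.n, Sat G (φs i) (f i.succ))).card

/-- Modal depth. -/
def GML.md {AP : Type} : GML AP → ℕ
  | .top => 0
  | .prop _ => 0
  | .neg φ => φ.md
  | .and φ ψ => max φ.md ψ.md
  | .dia _ _ φs => 1 + Finset.univ.sup fun i => (φs i).md

/-- Counting bound: the least `c` such that every modality `⟨T⟩^{≥j}` occurring in the
formula has `j ≤ c`. -/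
def GML.cb {AP : Type} : GML AP → ℕ
  | .top => 0
  | .prop _ => 0
  | .neg φ => φ.cb
  | .and φ ψ => max φ.cb ψ.cb
  | .dia _ j φs => max j (Finset.univ.sup fun i => (φs i).cb)

/-- Syntactic depth: counts both Boolean connectives and modalities along the deepest
branch of the syntax tree. -/
def GML.sd {AP : Type} : GML AP → ℕ
  | .top => 0
  | .prop _ => 0
  | .neg φ => 1 + φ.sd
  | .and φ ψ => 1 + max φ.sd ψ.sd
  | .dia _ _ φs => 1 + Finset.univ.sup fun i => (φs i).sd

/-- Well-formedness of a `GML(𝒯)` formula: all templates come from `𝒯` and all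
grades satisfy `j ≥ 1`. -/
def GML.Wf {AP : Type} (𝒯 : Finset Template) : GML AP → Prop
  | .top => True
  | .prop _ => True
  | .neg φ => φ.Wf 𝒯
  | .and φ ψ => φ.Wf 𝒯 ∧ ψ.Wf 𝒯
  | .dia T j φs => T ∈ 𝒯 ∧ 1 ≤ j ∧ ∀ i, (φs i).Wf 𝒯

/-- Finite conjunction (`⊤` for the empty list). -/
def bigConj {AP : Type} : List (GML AP) → GML AP
  | [] => .top
  | φ :: rest => .and φ (bigConj rest)

/-- `|S^{(G,v)}_{T,φ⃗}|`: the number of embeddings `f ∈ emb(T,(G,v))` with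
`(G, f(i)) ⊨ φᵢ` for all `1 ≤ i ≤ n_T`. -/
noncomputable def Scard {AP : Type} (G : LGraph (AP → Bool)) (T : Template) (v : ℕ)
    (φs : Fin T.n → GML AP) : ℕ :=
  ((embFinset T G v).filter (fun f => ∀ i : Fin T.n, Sat G (φs i) (f i.succ))).card

/-- The `l`-characteristic formula `χ^l_{(G,v)}`. -/
noncomputable def charU {AP : Type} [Fintype AP] (𝒯 : Finset Template) :
    ℕ → LGraph (AP → Bool) → ℕ → GML AP
  | 0 => fun G v =>
      bigConj ((Finset.univ : Finset AP).toList.map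
        (fun p => if G.lab v p then GML.prop p else GML.neg (GML.prop p)))
  | l + 1 => fun G v =>
      GML.and (charU 𝒯 l G v)
        (bigConj (𝒯.toList.map (fun T =>
          GML.and
            (bigConj ((embFinset T G v).toList.map (fun f =>
              GML.dia T (Scard G T v (fun i => charU 𝒯 l G (f i.succ)))
                (fun i => charU 𝒯 l G (f i.succ)))))
            (GML.neg (GML.dia T (Scard G T v (fun _ => GML.top) + 1)
              (fun _ => GML.top))))))

/-- `reps m` is a system of representatives for the `m`-`c`-`𝒯`-bisimilarity classes of
finite pointed labelled graphs: every representative is a genuine pointed graph, every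
pointed graph is `m`-`c`-`𝒯`-bisimilar to some representative, and distinct
representatives are non-bisimilar. -/
def RepSystem {AP : Type} (𝒯 : Finset Template) (c : ℕ)
    (reps : ℕ → Finset (LGraph (AP → Bool) × ℕ)) : Prop :=
  ∀ m : ℕ,
    (∀ q ∈ reps m, q.2 ∈ q.1.verts) ∧
    (∀ (G : LGraph (AP → Bool)) (v : ℕ), v ∈ G.verts →
      ∃ q ∈ reps m, BBisimilar 𝒯 m c q.1 q.2 G v) ∧
    (∀ q ∈ reps m, ∀ q' ∈ reps m, BBisimilar 𝒯 m c q.1 q.2 q'.1 q'.2 → q = q')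

/-- The bounded `l`-`c`-characteristic formula `χ^{l,c}_{(G,v)}`, relative to a chosen
system `reps` of representatives of the bounded bisimilarity classes. -/
noncomputable def charB {AP : Type} [Fintype AP] (𝒯 : Finset Template) (c : ℕ)
    (reps : ℕ → Finset (LGraph (AP → Bool) × ℕ)) :
    ℕ → LGraph (AP → Bool) → ℕ → GML AP
  | 0 => fun G v =>
      bigConj ((Finset.univ : Finset AP).toList.map
        (fun p => if G.lab v p then GML.prop p else GML.neg (GML.prop p)))
  | l + 1 => fun G v =>
      GML.and (charB 𝒯 c reps l G v)
        (bigConj (𝒯.toList.map (fun T =>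
          GML.and
            (bigConj ((embFinset T G v).toList.map (fun f =>
              GML.dia T (min c (Scard G T v (fun i => charB 𝒯 c reps l G (f i.succ))))
                (fun i => charB 𝒯 c reps l G (f i.succ)))))
            (bigConj (((Fintype.piFinset (fun _ : Fin T.n => reps l)).filter
                (fun t => Scard G T v
                  (fun i => charB 𝒯 c reps l (t i).1 (t i).2) + 1 ≤ c)).toList.map
              (fun t => GML.neg (GML.dia T
                  (Scard G T v (fun i => charB 𝒯 c reps l (t i).1 (t i).2) + 1)
                  (fun i => charB 𝒯 c reps l (t i).1 (t i).2))))))))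

/-- Standard graded forth condition on out-neighbours. -/
def StdForth {Λ : Type} (Z : ℕ → ℕ → Prop) (G G' : LGraph Λ) (v v' : ℕ) (k : ℕ) : Prop :=
  ∀ us : Fin k → ℕ, Function.Injective us → (∀ i, G.edge v (us i)) →
    ∃ us' : Fin k → ℕ, Function.Injective us' ∧ (∀ i, G'.edge v' (us' i)) ∧
      ∀ i, Z (us i) (us' i)

/-- `Z` is a standard graded `l`-bisimulation (the relation underlying standard 1-WL
colour refinement). -/
def IsStdBisim {Λ : Type} (G G' : LGraph Λ) : ℕ → (ℕ → ℕ → Prop) → Prop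
  | 0, Z => ∀ v v', Z v v' → G.lab v = G'.lab v'
  | l + 1, Z => ∃ Z', IsStdBisim G G' l Z' ∧
      ∀ v v', Z v v' → Z' v v' ∧ ∀ k, 1 ≤ k →
        StdForth Z' G G' v v' k ∧ StdForth (fun a b => Z' b a) G' G v' v k

/-- `(G,v)` and `(G',v')` are standard graded `l`-bisimilar. -/
def StdBisimilar {Λ : Type} (l : ℕ) (G : LGraph Λ) (v : ℕ) (G' : LGraph Λ) (v' : ℕ) : Prop :=
  ∃ Z, IsStdBisim G G' l Z ∧ Z v v'

/-- The edge template `T₁ = ({r,a}, E⁺ = {(r,a)}, E⁻ = ∅, r)`. -/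
def T1 : Template := ⟨1, {(0, 1)}, ∅, by decide⟩

/-- The triangle template `T△ = ({r,a,b}, E⁺ = {(r,a),(a,b),(b,r)}, E⁻ = ∅, r)`. -/
def Ttri : Template := ⟨2, {(0, 1), (1, 2), (2, 0)}, ∅, by decide⟩

/-- The directed 3-cycle, all nodes with the same constant label. -/
def G3 : LGraph Unit where
  verts := {0, 1, 2}
  edge u w := (u = 0 ∧ w = 1) ∨ (u = 1 ∧ w = 2) ∨ (u = 2 ∧ w = 0)
  lab _ := ()
  edge_mem := by rintro u w (⟨rfl, rfl⟩ | ⟨rfl, rfl⟩ | ⟨rfl, rfl⟩) <;> simp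

/-- The directed 6-cycle, all nodes with the same constant label. -/
def G6 : LGraph Unit where
  verts := Finset.range 6
  edge u w := u < 6 ∧ w = (u + 1) % 6
  lab _ := ()
  edge_mem := by
    rintro u w ⟨hu, rfl⟩
    simp only [Finset.mem_range]
    omega

/-! Bounded bisimilarity of depth `l` coincides with equality of a capped colour refinement:
the colour of `v` after `l + 1` rounds records its colour after `l` rounds and, for every template
`T ∈ 𝒯` and every tuple `t` of round-`l` colours, the number of embeddings of `T` at `v` whose
image has colour `t`, truncated at `c`. A back-and-forth step with at most `c` embeddings cannot see
beyond this truncated count, and conversely equal truncated counts let any `k ≤ c` distinct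
embeddings be matched colour by colour. Over a finite label alphabet every round produces only
finitely many colours, so there are only finitely many classes. -/

open Finset

theorem exists_injective_fiberwise {ι α γ : Type*} [Fintype ι] [DecidableEq γ] (a : ι → γ)
    (s : Finset α) (g : α → γ) (h : ∀ t, #{i | a i = t} ≤ #{x ∈ s | g x = t}) :
    ∃ F : ι → α, Function.Injective F ∧ ∀ i, F i ∈ s ∧ g (F i) = a i := by
  have hcard : ∀ t, Fintype.card {i // a i = t} ≤ #{x ∈ s | g x = t} := fun t => by
    simpa only [Fintype.card_subtype] using h t
  choose e he using fun t => Function.Embedding.exists_of_card_le_finset (hcard t)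
  have mem : ∀ t (i : {i // a i = t}), e t i ∈ s ∧ g (e t i) = t := fun t i => by
    simpa using he t (Set.mem_range_self i)
  have transport : ∀ i t (hi : a i = t), e t ⟨i, hi⟩ = e (a i) ⟨i, rfl⟩ := by
    rintro i _ rfl; rfl
  refine ⟨fun i => e (a i) ⟨i, rfl⟩, fun i j hij => ?_, fun i => mem _ _⟩
  have hcol : a i = a j := by
    rw [← (mem _ ⟨i, rfl⟩).2, ← (mem _ ⟨j, rfl⟩).2]
    exact congrArg g hij
  have : e (a j) ⟨i, hcol⟩ = e (a j) ⟨j, rfl⟩ := (transport i _ hcol).trans hij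
  exact congrArg Subtype.val ((e (a j)).injective this)

theorem exists_injective_matching_of_min_card_eq {α γ : Type*} [DecidableEq γ] {c k : ℕ}
    (hk : k ≤ c) {s s' : Finset α} {g g' : α → γ}
    (h : ∀ t, min c #{x ∈ s | g x = t} = min c #{x ∈ s' | g' x = t})
    {F : Fin k → α} (hF : Function.Injective F) (hFs : ∀ i, F i ∈ s) :
    ∃ F' : Fin k → α, Function.Injective F' ∧ ∀ i, F' i ∈ s' ∧ g' (F' i) = g (F i) := by
  refine exists_injective_fiberwise (g ∘ F) s' g' fun t => ?_
  have hle_c : #{i | g (F i) = t} ≤ c := (card_filter_le _ _).trans (by simpa using hk)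
  have hle_s : #{i | g (F i) = t} ≤ #{x ∈ s | g x = t} :=
    card_le_card_of_injOn F (fun i hi => by simp_all) hF.injOn
  calc #{i | g (F i) = t} ≤ min c #{x ∈ s | g x = t} := le_min hle_c hle_s
    _ = min c #{x ∈ s' | g' x = t} := h t
    _ ≤ #{x ∈ s' | g' x = t} := min_le_right _ _

lemma mem_embFinset {Λ : Type} {T : Template} {G : LGraph Λ} {w : ℕ}
    {f : Fin (T.n + 1) → ℕ} : f ∈ embFinset T G w ↔ IsEmb T G w f :=
  ⟨fun h => (mem_filter.1 h).2, fun h => mem_filter.2 ⟨Fintype.mem_piFinset.2 h.2.2.1, h⟩⟩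

noncomputable def embCount {Λ C : Type} (T : Template) (G : LGraph Λ) (v : ℕ) (κ : ℕ → C)
    (t : Fin (T.n + 1) → C) : ℕ :=
  #{f ∈ embFinset T G v | κ ∘ f = t}

section Forth

variable {Λ C : Type} {T : Template} {G G' : LGraph Λ} {v v' : ℕ} {κ κ' : ℕ → C} {c : ℕ}

theorem min_embCount_le_of_forth {W : ℕ → ℕ → Prop} (hW : ∀ a b, W a b → κ a = κ' b)
    (hforth : ∀ k, 1 ≤ k ∧ k ≤ c → Forth W T G G' v v' k) (t : Fin (T.n + 1) → C) :
    min c (embCount T G v κ t) ≤ min c (embCount T G' v' κ' t) := by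
  set k := min c (embCount T G v κ t)
  obtain hk0 | hk1 := Nat.eq_zero_or_pos k
  · exact hk0 ▸ Nat.zero_le _
  obtain ⟨F, hFs⟩ := Function.Embedding.exists_of_card_le_finset
    (α := Fin k) (s := {f ∈ embFinset T G v | κ ∘ f = t})
    (by rw [Fintype.card_fin]; exact min_le_right _ _)
  have hF : ∀ i, F i ∈ embFinset T G v ∧ κ ∘ F i = t := fun i =>
    mem_filter.1 (hFs (Set.mem_range_self i))
  obtain ⟨F', hF'inj, hF'emb, hrel⟩ :=
    hforth k ⟨hk1, min_le_left _ _⟩ F F.injective fun i => mem_embFinset.1 (hF i).1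
  have hF'mem : ∀ i, F' i ∈ ({f ∈ embFinset T G' v' | κ' ∘ f = t} : Finset _) := fun i =>
    mem_filter.2 ⟨mem_embFinset.2 (hF'emb i),
      funext fun u => (hW _ _ (hrel i u)).symm.trans (congrFun (hF i).2 u)⟩
  have hcard : k ≤ embCount T G' v' κ' t :=
    calc k = #(univ : Finset (Fin k)) := by simp
      _ ≤ embCount T G' v' κ' t := card_le_card_of_injOn F' (fun i _ => hF'mem i) hF'inj.injOn
  exact le_min (min_le_left _ _) hcard

theorem forth_of_min_embCount_eq {W : ℕ → ℕ → Prop} (hW : ∀ a b, κ a = κ' b → W a b)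
    (h : ∀ t, min c (embCount T G v κ t) = min c (embCount T G' v' κ' t)) {k : ℕ} (hk : k ≤ c) :
    Forth W T G G' v v' k := by
  intro F hF hFemb
  obtain ⟨F', hF'inj, hF'⟩ := exists_injective_matching_of_min_card_eq hk h hF
    fun i => mem_embFinset.2 (hFemb i)
  exact ⟨F', hF'inj, fun i => mem_embFinset.1 (hF' i).1,
    fun i u => hW _ _ (congrFun (hF' i).2 u).symm⟩

end Forth

def CappedColor (Λ : Type) (𝒯 : Finset Template) (c : ℕ) : ℕ → Type
  | 0 => Λ
  | l + 1 => CappedColor Λ 𝒯 c l ×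
      ((T : 𝒯) → (Fin (T.1.n + 1) → CappedColor Λ 𝒯 c l) → Fin (c + 1))

instance CappedColor.finite (Λ : Type) [Finite Λ] (𝒯 : Finset Template) (c : ℕ) :
    ∀ l, Finite (CappedColor Λ 𝒯 c l)
  | 0 => inferInstanceAs (Finite Λ)
  | l + 1 => by
      have := CappedColor.finite Λ 𝒯 c l
      exact inferInstanceAs (Finite (CappedColor Λ 𝒯 c l ×
        ((T : 𝒯) → (Fin (T.1.n + 1) → CappedColor Λ 𝒯 c l) → Fin (c + 1))))

noncomputable def cappedColor {Λ : Type} (𝒯 : Finset Template) (c : ℕ) (G : LGraph Λ) :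
    (l : ℕ) → ℕ → CappedColor Λ 𝒯 c l
  | 0, v => G.lab v
  | l + 1, v => (cappedColor 𝒯 c G l v, fun T t =>
      ⟨min c (embCount T.1 G v (cappedColor 𝒯 c G l) t), Nat.lt_succ_of_le (min_le_left _ _)⟩)

section CappedColor

variable {Λ : Type} {𝒯 : Finset Template} {c : ℕ}

theorem cappedColor_eq_of_isBisimP {G G' : LGraph Λ} :
    ∀ {l : ℕ} {Z : ℕ → ℕ → Prop}, IsBisimP 𝒯 (fun k => 1 ≤ k ∧ k ≤ c) G G' l Z →
      ∀ {v v'}, Z v v' → cappedColor 𝒯 c G l v = cappedColor 𝒯 c G' l v'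
  | 0, _, hZ, _, _, hvv' => hZ _ _ hvv'
  | l + 1, _, ⟨Z', hZ', hstep⟩, v, v', hvv' => by
    have ih : ∀ {a b}, Z' a b → cappedColor 𝒯 c G l a = cappedColor 𝒯 c G' l b :=
      cappedColor_eq_of_isBisimP hZ'
    obtain ⟨hZ'vv', hforth⟩ := hstep v v' hvv'
    refine Prod.ext (ih hZ'vv') (funext fun T => funext fun t => Fin.ext (le_antisymm ?_ ?_))
    · exact min_embCount_le_of_forth (W := Z') (fun _ _ => ih)
        (fun k hk => (hforth T.1 T.2 k hk).1) t
    · exact min_embCount_le_of_forth (W := fun a b => Z' b a) (fun _ _ h => (ih h).symm)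
        (fun k hk => (hforth T.1 T.2 k hk).2) t

theorem isBisimP_cappedColor_eq (G G' : LGraph Λ) :
    ∀ l, IsBisimP 𝒯 (fun k => 1 ≤ k ∧ k ≤ c) G G' l
      (fun a b => cappedColor 𝒯 c G l a = cappedColor 𝒯 c G' l b)
  | 0 => fun _ _ h => h
  | l + 1 => by
    refine ⟨_, isBisimP_cappedColor_eq G G' l, fun v v' hvv' => ⟨congrArg Prod.fst hvv', ?_⟩⟩
    intro T hT k hk
    have hcount : ∀ t, min c (embCount T G v (cappedColor 𝒯 c G l) t) =
        min c (embCount T G' v' (cappedColor 𝒯 c G' l) t) := fun t =>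
      congrArg Fin.val (congrFun (congrFun (congrArg Prod.snd hvv') ⟨T, hT⟩) t)
    exact ⟨forth_of_min_embCount_eq (fun _ _ h => h) hcount hk.2,
      forth_of_min_embCount_eq (fun _ _ h => h.symm) (fun t => (hcount t).symm) hk.2⟩

theorem bbisimilar_iff_cappedColor_eq {l : ℕ} {G G' : LGraph Λ} {v v' : ℕ} :
    BBisimilar 𝒯 l c G v G' v' ↔ cappedColor 𝒯 c G l v = cappedColor 𝒯 c G' l v' :=
  ⟨fun ⟨_, hZ, hvv'⟩ => cappedColor_eq_of_isBisimP hZ hvv',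
    fun h => ⟨_, isBisimP_cappedColor_eq G G' l, h⟩⟩

end CappedColor

theorem bounded_bisim_finite_index_general (d l c : ℕ) (𝒯 : Finset Template) :
    Set.Finite {Cl : Set (LGraph (Fin d → Bool) × ℕ) |
      ∃ p : LGraph (Fin d → Bool) × ℕ, p.2 ∈ p.1.verts ∧
        Cl = {q | q.2 ∈ q.1.verts ∧ BBisimilar 𝒯 l c p.1 p.2 q.1 q.2}} := by
  refine (Set.finite_range fun x : CappedColor (Fin d → Bool) 𝒯 c l =>
    {q : LGraph (Fin d → Bool) × ℕ | q.2 ∈ q.1.verts ∧ cappedColor 𝒯 c q.1 l q.2 = x}).subset ?_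
  rintro _ ⟨p, -, rfl⟩
  refine ⟨cappedColor 𝒯 c p.1 l p.2, Set.ext fun q => ?_⟩
  simp only [Set.mem_ofPred_eq, bbisimilar_iff_cappedColor_eq, eq_comm]

/-- For every `l`, every `c ≥ 1`, every finite set of templates `𝒯`, and
every fixed finite label alphabet `{0,1}^d`, the relation of `l`-`c`-`𝒯`-bisimilarity on
pointed labelled graphs has finite index: the collection of its equivalence classes is
finite. -/
theorem bounded_bisim_finite_index (d l c : ℕ) (hc : 1 ≤ c) (𝒯 : Finset Template) :
    Set.Finite {Cl : Set (LGraph (Fin d → Bool) × ℕ) |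
      ∃ p : LGraph (Fin d → Bool) × ℕ, p.2 ∈ p.1.verts ∧
        Cl = {q | q.2 ∈ q.1.verts ∧ BBisimilar 𝒯 l c p.1 p.2 q.1 q.2}} :=
  bounded_bisim_finite_index_general d l c 𝒯
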